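/- Let G be a graph with no star cutset and let (X₁,X₂,A₁,A₂,B₁,B₂) be a split of a 2-join of G. Then for i = 1,2: every vertex of Aᵢ has a non-neighbor in Bᵢ, every vertex of Bᵢ has a non-neighbor in Aᵢ, and |Xᵢ| ≥ 4. -/

import Mathlib

/-!
If `a ∈ A₁` were complete to `B₁`, every edge leaving `X₁` would meet `N[a]`, so the star `N[a]`
forces `X₁ ⊆ N[a]`; any other vertex of `X₁ \ B₁` would then be dominated by `a` and cut off by a
star, so `A₁ = {a}`. If `B₁ = {b}`, then `G[X₁]` is the single edge `ab`, a chordless path.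
Otherwise the same argument at some `b ∈ B₁` gives `X₁ ⊆ N[b]`, and any other `b' ∈ B₁` is dominated
by `b`, again yielding a star cutset.

For the bound: if `A₁ = {a}`, then `a` has no neighbour in `B₁`, so the path from `A₁` to `B₁`
leaves `a` through a vertex outside `A₁ ∪ B₁`. If `|A₁| = |B₁| = 1` and there is only one such
vertex `c`, then `G[X₁]` is the chordless path `acb`.
-/

open SimpleGraph

universe u

variable {V : Type u}

/-- Removing the vertex set `S` from `G` leaves a disconnected (or empty) graph. -/
def RemoveDisconnects (G : SimpleGraph V) (S : Set V) : Prop :=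
  ¬ (G.induce (Sᶜ)).Connected

/-- `S` is a star cutset of `G`: `S = {x} ∪ R` with `R ⊆ N(x)`, and removing `S`
disconnects `G`. -/
def IsStarCutset (G : SimpleGraph V) (S : Set V) : Prop :=
  (∃ x ∈ S, ∀ y ∈ S, y = x ∨ G.Adj x y) ∧ RemoveDisconnects G S

def NoStarCutset (G : SimpleGraph V) : Prop :=
  ∀ S : Set V, ¬ IsStarCutset G S

/-- `G` is bipartite. -/
def Bipartite (G : SimpleGraph V) : Prop := G.Colorable 2

/-- Degree of a vertex, as the cardinality of its neighbor set. -/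
noncomputable def deg (G : SimpleGraph V) (v : V) : ℕ := (G.neighborSet v).ncard

/-- A hole: an induced (chordless) cycle of length at least 4. -/
def IsHole (G : SimpleGraph V) {v : V} (c : G.Walk v v) : Prop :=
  c.IsCycle ∧ 4 ≤ c.length ∧
    ∀ a b : V, a ∈ c.support → b ∈ c.support → G.Adj a b → s(a, b) ∈ c.edges

/-- `G` is balanceable: there is a signing of the edges with `+1, -1` such that
every hole has weight `≡ 0 (mod 4)`. -/
def Balanceable (G : SimpleGraph V) : Prop :=
  ∃ w : Sym2 V → ℤ, (∀ e ∈ G.edgeSet, w e = 1 ∨ w e = -1) ∧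
    ∀ (v : V) (c : G.Walk v v), IsHole G c → ((c.edges.map w).sum) % 4 = 0

/-- `G` is balanced: every hole has length `≡ 0 (mod 4)`. -/
def BalancedGraph (G : SimpleGraph V) : Prop :=
  ∀ (v : V) (c : G.Walk v v), IsHole G c → c.length % 4 = 0

/-- `G` has no hole of length 4. -/
def FourHoleFree (G : SimpleGraph V) : Prop :=
  ∀ (v : V) (c : G.Walk v v), IsHole G c → c.length ≠ 4

def LinearBalanceable (G : SimpleGraph V) : Prop :=
  Balanceable G ∧ FourHoleFree G

/-- `G` is 2-connected: at least 3 vertices and deleting any vertex leaves it connected. -/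
def TwoConnected (G : SimpleGraph V) : Prop :=
  3 ≤ Nat.card V ∧ ∀ v : V, (G.induce ({v}ᶜ : Set V)).Connected

/-- `e` is a chord of the cycle `c`. -/
def IsChord (G : SimpleGraph V) {x : V} (c : G.Walk x x) (e : Sym2 V) : Prop :=
  e ∈ G.edgeSet ∧ e ∉ c.edges ∧ ∀ v ∈ e, v ∈ c.support

/-- `e` is the unique chord of the cycle `c`. -/
def IsUniqueChord (G : SimpleGraph V) {x : V} (c : G.Walk x x) (e : Sym2 V) : Prop :=
  c.IsCycle ∧ IsChord G c e ∧ ∀ f, IsChord G c f → f = e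

/-- A pair of twins: distinct vertices with the same neighborhood, of size at least 3. -/
def IsTwinPair (G : SimpleGraph V) (u v : V) : Prop :=
  u ≠ v ∧ G.neighborSet u = G.neighborSet v ∧ 3 ≤ (G.neighborSet u).ncard

/-- `v` is a cut vertex: two vertices distinct from `v` are connected in `G` but not
in `G - v`. -/
def IsCutVertex (G : SimpleGraph V) (v : V) : Prop :=
  ∃ (x y : V) (hx : x ∈ ({v}ᶜ : Set V)) (hy : y ∈ ({v}ᶜ : Set V)),
    G.Reachable x y ∧ ¬ (G.induce ({v}ᶜ : Set V)).Reachable ⟨x, hx⟩ ⟨y, hy⟩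

/-- The graph `R₁₀`: the 10-cycle `x₁x₂…x₁₀x₁` together with the chords `xᵢx_{i+5}`. -/
def R10 : SimpleGraph (ZMod 10) :=
  SimpleGraph.fromRel (fun i j => j = i + 1 ∨ j = i + 5)

/-- `H` is a chordless path (as a graph): some chordless Hamiltonian path carries all
of its edges. -/
def IsChordlessPathGraph {W : Type*} (H : SimpleGraph W) : Prop :=
  ∃ (u v : W) (p : H.Walk u v), p.IsPath ∧ (∀ w, w ∈ p.support) ∧
    ∀ e ∈ H.edgeSet, e ∈ p.edges

/-- `(X₁, X₂, A₁, A₂, B₁, B₂)` is a split of a 2-join of `G`. -/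
structure TwoJoinSplit (G : SimpleGraph V) (X1 X2 A1 A2 B1 B2 : Set V) : Prop where
  cover : ∀ v, v ∈ X1 ∨ v ∈ X2
  disj : Disjoint X1 X2
  A1sub : A1 ⊆ X1
  B1sub : B1 ⊆ X1
  A2sub : A2 ⊆ X2
  B2sub : B2 ⊆ X2
  A1B1disj : Disjoint A1 B1
  A2B2disj : Disjoint A2 B2
  A1ne : A1.Nonempty
  B1ne : B1.Nonempty
  A2ne : A2.Nonempty
  B2ne : B2.Nonempty
  adjA : ∀ a1 ∈ A1, ∀ a2 ∈ A2, G.Adj a1 a2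
  adjB : ∀ b1 ∈ B1, ∀ b2 ∈ B2, G.Adj b1 b2
  noOther : ∀ x1 ∈ X1, ∀ x2 ∈ X2, G.Adj x1 x2 →
    (x1 ∈ A1 ∧ x2 ∈ A2) ∨ (x1 ∈ B1 ∧ x2 ∈ B2)
  path1 : ∃ a b : X1, (a : V) ∈ A1 ∧ (b : V) ∈ B1 ∧ (G.induce X1).Reachable a b
  path2 : ∃ a b : X2, (a : V) ∈ A2 ∧ (b : V) ∈ B2 ∧ (G.induce X2).Reachable a b
  notPath1 : A1.ncard = 1 → B1.ncard = 1 → ¬ IsChordlessPathGraph (G.induce X1)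
  notPath2 : A2.ncard = 1 → B2.ncard = 1 → ¬ IsChordlessPathGraph (G.induce X2)

/-- `(X₁, X₂, A₁, …, A₆)` is a split of a 6-join of `G`. -/
structure SixJoinSplit (G : SimpleGraph V) (X1 X2 A1 A2 A3 A4 A5 A6 : Set V) : Prop where
  cover : ∀ v, v ∈ X1 ∨ v ∈ X2
  disj : Disjoint X1 X2
  sub1 : A1 ⊆ X1
  sub3 : A3 ⊆ X1
  sub5 : A5 ⊆ X1
  sub2 : A2 ⊆ X2
  sub4 : A4 ⊆ X2
  sub6 : A6 ⊆ X2
  disj13 : Disjoint A1 A3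
  disj15 : Disjoint A1 A5
  disj35 : Disjoint A3 A5
  disj24 : Disjoint A2 A4
  disj26 : Disjoint A2 A6
  disj46 : Disjoint A4 A6
  ne1 : A1.Nonempty
  ne2 : A2.Nonempty
  ne3 : A3.Nonempty
  ne4 : A4.Nonempty
  ne5 : A5.Nonempty
  ne6 : A6.Nonempty
  adj12 : ∀ a ∈ A1, ∀ b ∈ A2, G.Adj a b
  adj23 : ∀ a ∈ A2, ∀ b ∈ A3, G.Adj a b
  adj34 : ∀ a ∈ A3, ∀ b ∈ A4, G.Adj a b
  adj45 : ∀ a ∈ A4, ∀ b ∈ A5, G.Adj a b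
  adj56 : ∀ a ∈ A5, ∀ b ∈ A6, G.Adj a b
  adj61 : ∀ a ∈ A6, ∀ b ∈ A1, G.Adj a b
  noOther : ∀ x ∈ X1, ∀ y ∈ X2, G.Adj x y →
    (x ∈ A1 ∧ y ∈ A2) ∨ (x ∈ A1 ∧ y ∈ A6) ∨ (x ∈ A3 ∧ y ∈ A2) ∨
    (x ∈ A3 ∧ y ∈ A4) ∨ (x ∈ A5 ∧ y ∈ A4) ∨ (x ∈ A5 ∧ y ∈ A6)
  card1 : 4 ≤ X1.ncard
  card2 : 4 ≤ X2.ncard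


namespace SimpleGraph

def closedNeighborSet (G : SimpleGraph V) (x : V) : Set V := insert x (G.neighborSet x)

end SimpleGraph

namespace NoStarCutset

variable {G : SimpleGraph V}

lemma exists_adj_across (hG : NoStarCutset G) {x : V} {R : Set V} (hR : R ⊆ G.neighborSet x)
    {T : Set V} {u w : V} (huT : u ∈ T) (hwT : w ∉ T) (hu : u ∉ insert x R)
    (hw : w ∉ insert x R) :
    ∃ y ∈ T, ∃ z ∉ T, y ∉ insert x R ∧ z ∉ insert x R ∧ G.Adj y z := by
  have hconn : (G.induce (insert x R)ᶜ).Connected := by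
    by_contra h
    refine hG _ ⟨⟨x, Set.mem_insert _ _, fun y hy => ?_⟩, h⟩
    rcases hy with rfl | hy
    exacts [Or.inl rfl, Or.inr (hR hy)]
  obtain ⟨p⟩ := hconn.preconnected ⟨u, hu⟩ ⟨w, hw⟩
  obtain ⟨d, -, hd₁, hd₂⟩ := p.exists_boundary_dart {y | y.1 ∈ T} huT hwT
  exact ⟨d.fst, hd₁, d.snd, hd₂, d.fst.2, d.snd.2, d.adj⟩

lemma subset_closedNeighborSet (hG : NoStarCutset G) {x w : V} {T : Set V} (hwT : w ∉ T)
    (hw : w ∉ G.closedNeighborSet x)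
    (hcross : ∀ y ∈ T, ∀ z ∉ T, G.Adj y z →
      y ∈ G.closedNeighborSet x ∨ z ∈ G.closedNeighborSet x) :
    T ⊆ G.closedNeighborSet x := by
  intro u huT
  by_contra hu
  obtain ⟨y, hyT, z, hzT, hy, hz, hyz⟩ := hG.exists_adj_across subset_rfl huT hwT hu hw
  exact (hcross y hyT z hzT hyz).elim hy hz

/-- A vertex `v` with `N(v) ⊆ N[x]` is cut off by the star `{x} ∪ (N(x) \ {v})`. -/
lemma mem_closedNeighborSet_of_neighborSet_subset (hG : NoStarCutset G) {x v w : V}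
    (hvx : v ≠ x) (hN : G.neighborSet v ⊆ G.closedNeighborSet x) (hwv : w ≠ v) :
    w ∈ G.closedNeighborSet x := by
  by_contra hw
  have hv : v ∉ insert x (G.neighborSet x \ {v}) := by
    rintro (h | ⟨-, h⟩)
    exacts [hvx h, h rfl]
  have hw' : w ∉ insert x (G.neighborSet x \ {v}) := fun h =>
    hw (Set.insert_subset_insert Set.sdiff_subset h)
  obtain ⟨y, rfl, z, hzv, -, hz, hyz⟩ :=
    hG.exists_adj_across Set.sdiff_subset (Set.mem_singleton v) hwv hv hw'
  rcases hN hyz with h | h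
  exacts [hz (Or.inl h), hz (Or.inr ⟨h, hzv⟩)]

end NoStarCutset

section ChordlessPath

variable {W : Type*} {H : SimpleGraph W}

lemma isChordlessPathGraph_of_adj {u v : W} (huv : H.Adj u v) (hcover : ∀ w, w = u ∨ w = v) :
    IsChordlessPathGraph H := by
  refine ⟨u, v, .cons huv .nil, ?_, ?_, ?_⟩
  · simp [SimpleGraph.Walk.isPath_def, huv.ne]
  · intro w
    rcases hcover w with rfl | rfl <;> simp
  · intro e he
    induction e using Sym2.ind with
    | _ x y =>
      rcases hcover x with rfl | rfl <;> rcases hcover y with rfl | rfl <;>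
        simp_all [Sym2.eq_swap]

lemma isChordlessPathGraph_of_adj_adj {u c v : W} (huc : H.Adj u c) (hcv : H.Adj c v)
    (huv : u ≠ v) (hnadj : ¬ H.Adj u v) (hcover : ∀ w, w = u ∨ w = c ∨ w = v) :
    IsChordlessPathGraph H := by
  refine ⟨u, v, .cons huc (.cons hcv .nil), ?_, ?_, ?_⟩
  · simp [SimpleGraph.Walk.isPath_def, huc.ne, hcv.ne, huv]
  · intro w
    rcases hcover w with rfl | rfl | rfl <;> simp
  · intro e he
    induction e using Sym2.ind with
    | _ x y =>
      rcases hcover x with rfl | rfl | rfl <;> rcases hcover y with rfl | rfl | rfl <;>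
        simp_all [Sym2.eq_swap, H.adj_comm]

end ChordlessPath

namespace TwoJoinSplit

variable {G : SimpleGraph V} {X1 X2 A1 A2 B1 B2 : Set V}

lemma swap_ends (hs : TwoJoinSplit G X1 X2 A1 A2 B1 B2) :
    TwoJoinSplit G X1 X2 B1 B2 A1 A2 where
  cover := hs.cover
  disj := hs.disj
  A1sub := hs.B1sub
  B1sub := hs.A1sub
  A2sub := hs.B2sub
  B2sub := hs.A2sub
  A1B1disj := hs.A1B1disj.symm
  A2B2disj := hs.A2B2disj.symm
  A1ne := hs.B1ne
  B1ne := hs.A1ne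
  A2ne := hs.B2ne
  B2ne := hs.A2ne
  adjA := hs.adjB
  adjB := hs.adjA
  noOther x hx y hy h := (hs.noOther x hx y hy h).symm
  path1 := let ⟨a, b, ha, hb, hr⟩ := hs.path1; ⟨b, a, hb, ha, hr.symm⟩
  path2 := let ⟨a, b, ha, hb, hr⟩ := hs.path2; ⟨b, a, hb, ha, hr.symm⟩
  notPath1 h₁ h₂ := hs.notPath1 h₂ h₁
  notPath2 h₁ h₂ := hs.notPath2 h₂ h₁

lemma symm (hs : TwoJoinSplit G X1 X2 A1 A2 B1 B2) :
    TwoJoinSplit G X2 X1 A2 A1 B2 B1 where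
  cover v := (hs.cover v).symm
  disj := hs.disj.symm
  A1sub := hs.A2sub
  B1sub := hs.B2sub
  A2sub := hs.A1sub
  B2sub := hs.B1sub
  A1B1disj := hs.A2B2disj
  A2B2disj := hs.A1B1disj
  A1ne := hs.A2ne
  B1ne := hs.B2ne
  A2ne := hs.A1ne
  B2ne := hs.B1ne
  adjA a2 ha2 a1 ha1 := (hs.adjA a1 ha1 a2 ha2).symm
  adjB b2 hb2 b1 hb1 := (hs.adjB b1 hb1 b2 hb2).symm
  noOther x hx y hy h := (hs.noOther y hy x hx h.symm).imp And.symm And.symm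
  path1 := hs.path2
  path2 := hs.path1
  notPath1 := hs.notPath2
  notPath2 := hs.notPath1

lemma adj_cases (hs : TwoJoinSplit G X1 X2 A1 A2 B1 B2) {v y : V} (hv : v ∈ X1)
    (hvy : G.Adj v y) :
    y ∈ X1 ∨ (v ∈ A1 ∧ y ∈ A2) ∨ (v ∈ B1 ∧ y ∈ B2) :=
  (hs.cover y).imp_right (hs.noOther v hv y · hvy)

lemma not_adj_of_mem_A1_of_mem_B2 (hs : TwoJoinSplit G X1 X2 A1 A2 B1 B2) {a b : V}
    (ha : a ∈ A1) (hb : b ∈ B2) : ¬ G.Adj a b :=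
  fun hab => (hs.noOther a (hs.A1sub ha) b (hs.B2sub hb) hab).elim
    (fun h => hs.A2B2disj.notMem_of_mem_left h.2 hb)
    (fun h => hs.A1B1disj.notMem_of_mem_left ha h.1)

lemma not_mem_closedNeighborSet (hs : TwoJoinSplit G X1 X2 A1 A2 B1 B2) {x w : V}
    (hx : x ∈ X1) (hw : w ∈ X2) (hxw : ¬ G.Adj x w) :
    w ∉ G.closedNeighborSet x := by
  rintro (rfl | h)
  exacts [hs.disj.notMem_of_mem_left hx hw, hxw h]

lemma subset_closedNeighborSet (hs : TwoJoinSplit G X1 X2 A1 A2 B1 B2) (hG : NoStarCutset G)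
    {x w : V}
    (hA : A1 ⊆ G.closedNeighborSet x ∨ A2 ⊆ G.closedNeighborSet x)
    (hB : B1 ⊆ G.closedNeighborSet x ∨ B2 ⊆ G.closedNeighborSet x)
    (hw : w ∈ X2) (hwx : w ∉ G.closedNeighborSet x) :
    X1 ⊆ G.closedNeighborSet x := by
  refine hG.subset_closedNeighborSet (hs.disj.notMem_of_mem_right hw) hwx ?_
  intro y hy z hz hyz
  rcases (hs.adj_cases hy hyz).resolve_left hz with ⟨hyA, hzA⟩ | ⟨hyB, hzB⟩
  · exact hA.imp (· hyA) (· hzA)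
  · exact hB.imp (· hyB) (· hzB)

lemma neighborSet_subset_closedNeighborSet (hs : TwoJoinSplit G X1 X2 A1 A2 B1 B2) {x v : V}
    (hv : v ∈ X1) (hX1 : X1 ⊆ G.closedNeighborSet x) (hA : v ∈ A1 → A2 ⊆ G.neighborSet x)
    (hB : v ∈ B1 → B2 ⊆ G.neighborSet x) :
    G.neighborSet v ⊆ G.closedNeighborSet x := by
  intro y hvy
  rcases hs.adj_cases hv hvy with hy | ⟨hvA, hyA⟩ | ⟨hvB, hyB⟩
  exacts [hX1 hy, Or.inr (hA hvA hyA), Or.inr (hB hvB hyB)]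

lemma subset_insert_of_forall_adj (hs : TwoJoinSplit G X1 X2 A1 A2 B1 B2) (hG : NoStarCutset G)
    {a : V} (ha : a ∈ A1) (hcomplete : ∀ b ∈ B1, G.Adj a b) : X1 ⊆ insert a B1 := by
  obtain ⟨b2, hb2⟩ := hs.B2ne
  have hb2a : b2 ∉ G.closedNeighborSet a :=
    hs.not_mem_closedNeighborSet (hs.A1sub ha) (hs.B2sub hb2)
      (hs.not_adj_of_mem_A1_of_mem_B2 ha hb2)
  have hX1a : X1 ⊆ G.closedNeighborSet a :=
    hs.subset_closedNeighborSet hG (.inr fun y hy => Or.inr (hs.adjA a ha y hy))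
      (.inl fun y hy => Or.inr (hcomplete y hy)) (hs.B2sub hb2) hb2a
  intro v hv
  by_contra h
  rw [Set.mem_insert_iff, not_or] at h
  have hN := hs.neighborSet_subset_closedNeighborSet hv hX1a
    (fun _ y hy => hs.adjA a ha y hy) (absurd · h.2)
  exact hb2a (hG.mem_closedNeighborSet_of_neighborSet_subset h.1 hN
    fun hb2v => hs.disj.notMem_of_mem_left hv (hb2v ▸ hs.B2sub hb2))

lemma exists_not_adj (hs : TwoJoinSplit G X1 X2 A1 A2 B1 B2) (hG : NoStarCutset G)
    {a : V} (ha : a ∈ A1) : ∃ b ∈ B1, ¬ G.Adj a b := by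
  by_contra! hcomplete
  have hX1 := hs.subset_insert_of_forall_adj hG ha hcomplete
  have hA1 : A1 = {a} := Set.eq_singleton_iff_unique_mem.mpr
    ⟨ha, fun v hv => (hX1 (hs.A1sub hv)).resolve_right (hs.A1B1disj.notMem_of_mem_left hv)⟩
  obtain ⟨b0, hb0⟩ := hs.B1ne
  have hb0X1 : b0 ∈ X1 := hs.B1sub hb0
  by_cases hB1 : ∀ b ∈ B1, b = b0
  · refine hs.notPath1 (by simp [hA1])
      (by simp [Set.eq_singleton_iff_unique_mem.mpr ⟨hb0, hB1⟩]) ?_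
    refine isChordlessPathGraph_of_adj (u := ⟨a, hs.A1sub ha⟩) (v := ⟨b0, hb0X1⟩)
      (hcomplete b0 hb0) fun ⟨x, hx⟩ => ?_
    rcases hX1 hx with rfl | hxB
    exacts [.inl rfl, .inr (Subtype.ext (hB1 x hxB))]
  push Not at hB1
  obtain ⟨b', hb', hb'b0⟩ := hB1
  obtain ⟨a2, ha2⟩ := hs.A2ne
  have ha2b0 : a2 ∉ G.closedNeighborSet b0 :=
    hs.not_mem_closedNeighborSet hb0X1 (hs.A2sub ha2)
      (hs.swap_ends.not_adj_of_mem_A1_of_mem_B2 hb0 ha2)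
  have hX1b0 : X1 ⊆ G.closedNeighborSet b0 :=
    hs.subset_closedNeighborSet hG
      (.inl fun y hy => by
        rw [hA1] at hy
        exact hy ▸ Or.inr (hcomplete b0 hb0).symm)
      (.inr fun y hy => Or.inr (hs.adjB b0 hb0 y hy)) (hs.A2sub ha2) ha2b0
  have hN := hs.neighborSet_subset_closedNeighborSet (hs.B1sub hb') hX1b0
    (absurd · (hs.A1B1disj.notMem_of_mem_right hb')) (fun _ y hy => hs.adjB b0 hb0 y hy)
  exact ha2b0 (hG.mem_closedNeighborSet_of_neighborSet_subset hb'b0 hN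
    fun h => hs.disj.notMem_of_mem_left (hs.B1sub hb') (h ▸ hs.A2sub ha2))

lemma exists_adj_of_eq_singleton (hs : TwoJoinSplit G X1 X2 A1 A2 B1 B2)
    (hB : ∀ b ∈ B1, ∃ a ∈ A1, ¬ G.Adj b a) {a : V} (hA : A1 = {a}) :
    ∃ c ∈ X1 \ (A1 ∪ B1), G.Adj a c := by
  obtain ⟨u, v, hu, hv, ⟨p⟩⟩ := hs.path1
  obtain rfl : (u : V) = a := by rw [hA] at hu; exact hu
  cases p with
  | nil => exact (hs.A1B1disj.notMem_of_mem_left hu hv).elim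
  | @cons _ c _ huc _ =>
    refine ⟨c, ⟨c.2, ?_⟩, huc⟩
    rintro (hcA | hcB)
    · rw [hA] at hcA
      exact huc.ne (Subtype.ext hcA.symm)
    · obtain ⟨a', ha', hca'⟩ := hB c hcB
      rw [hA] at ha'
      exact hca' (ha' ▸ huc.symm)

lemma ncard_sdiff_ne_one (hs : TwoJoinSplit G X1 X2 A1 A2 B1 B2)
    (hA : ∀ a ∈ A1, ∃ b ∈ B1, ¬ G.Adj a b) (hB : ∀ b ∈ B1, ∃ a ∈ A1, ¬ G.Adj b a)
    (hA1 : A1.ncard = 1) (hB1 : B1.ncard = 1) : (X1 \ (A1 ∪ B1)).ncard ≠ 1 := by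
  intro hN
  obtain ⟨a, rfl⟩ := Set.ncard_eq_one.mp hA1
  obtain ⟨b, rfl⟩ := Set.ncard_eq_one.mp hB1
  obtain ⟨c, hc⟩ := Set.ncard_eq_one.mp hN
  obtain ⟨c₁, hc₁, hac⟩ := hs.exists_adj_of_eq_singleton hB rfl
  obtain ⟨c₂, hc₂, hbc⟩ := hs.swap_ends.exists_adj_of_eq_singleton hA rfl
  rw [hc, Set.mem_singleton_iff] at hc₁
  rw [Set.union_comm, hc, Set.mem_singleton_iff] at hc₂
  subst c₁ c₂
  have hcX : c ∈ X1 := (hc.symm ▸ Set.mem_singleton c : c ∈ X1 \ _).1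
  have hcover : ∀ x ∈ X1, x = a ∨ x = c ∨ x = b := by
    intro x hx
    by_cases hxAB : x ∈ ({a} ∪ {b} : Set V)
    · rcases hxAB with rfl | rfl
      exacts [.inl rfl, .inr (.inr rfl)]
    · exact .inr (.inl (hc ▸ ⟨hx, hxAB⟩ : x ∈ ({c} : Set V)))
  have hab : ¬ G.Adj a b := by
    obtain ⟨b', hb', h⟩ := hA a rfl
    rwa [Set.mem_singleton_iff.mp hb'] at h
  refine hs.notPath1 hA1 hB1 (isChordlessPathGraph_of_adj_adj (u := ⟨a, hs.A1sub rfl⟩)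
    (c := ⟨c, hcX⟩) (v := ⟨b, hs.B1sub rfl⟩) hac hbc.symm ?_ hab fun ⟨x, hx⟩ => ?_)
  · exact fun h => hs.A1B1disj.notMem_of_mem_left rfl (congrArg Subtype.val h)
  · rcases hcover x hx with rfl | rfl | rfl
    exacts [.inl rfl, .inr (.inl rfl), .inr (.inr rfl)]

lemma four_le_ncard [Finite V] (hs : TwoJoinSplit G X1 X2 A1 A2 B1 B2)
    (hA : ∀ a ∈ A1, ∃ b ∈ B1, ¬ G.Adj a b) (hB : ∀ b ∈ B1, ∃ a ∈ A1, ¬ G.Adj b a) :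
    4 ≤ X1.ncard := by
  have hX1 : X1.ncard = A1.ncard + B1.ncard + (X1 \ (A1 ∪ B1)).ncard := by
    rw [← Set.ncard_union_eq hs.A1B1disj, add_comm,
      Set.ncard_sdiff_add_ncard_of_subset (Set.union_subset hs.A1sub hs.B1sub)]
  have hA1 : 0 < A1.ncard := hs.A1ne.ncard_pos
  have hB1 : 0 < B1.ncard := hs.B1ne.ncard_pos
  have hNA : A1.ncard = 1 → 0 < (X1 \ (A1 ∪ B1)).ncard := fun h =>
    let ⟨_, hA⟩ := Set.ncard_eq_one.mp h
    let ⟨_, hc, _⟩ := hs.exists_adj_of_eq_singleton hB hA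
    (Set.nonempty_of_mem hc).ncard_pos
  have hNB : B1.ncard = 1 → 0 < (X1 \ (A1 ∪ B1)).ncard := fun h =>
    let ⟨_, hB⟩ := Set.ncard_eq_one.mp h
    let ⟨_, hc, _⟩ := hs.swap_ends.exists_adj_of_eq_singleton hA hB
    (Set.nonempty_of_mem (Set.union_comm A1 B1 ▸ hc)).ncard_pos
  have hN := hs.ncard_sdiff_ne_one hA hB
  omega

end TwoJoinSplit

/-- with no star cutset, every vertex of `Aᵢ` has a non-neighbor in `Bᵢ`,
every vertex of `Bᵢ` has a non-neighbor in `Aᵢ`, and `|Xᵢ| ≥ 4`. -/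
theorem stmt3 {V : Type u} [Fintype V] (G : SimpleGraph V)
    (X1 X2 A1 A2 B1 B2 : Set V)
    (hsplit : TwoJoinSplit G X1 X2 A1 A2 B1 B2)
    (hstar : NoStarCutset G) :
    (∀ a ∈ A1, ∃ b ∈ B1, ¬ G.Adj a b) ∧ (∀ b ∈ B1, ∃ a ∈ A1, ¬ G.Adj b a) ∧
    (∀ a ∈ A2, ∃ b ∈ B2, ¬ G.Adj a b) ∧ (∀ b ∈ B2, ∃ a ∈ A2, ¬ G.Adj b a) ∧
    4 ≤ X1.ncard ∧ 4 ≤ X2.ncard := by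
  have h₁ : ∀ a ∈ A1, ∃ b ∈ B1, ¬ G.Adj a b := fun _ => hsplit.exists_not_adj hstar
  have h₂ : ∀ b ∈ B1, ∃ a ∈ A1, ¬ G.Adj b a := fun _ => hsplit.swap_ends.exists_not_adj hstar
  have h₃ : ∀ a ∈ A2, ∃ b ∈ B2, ¬ G.Adj a b := fun _ => hsplit.symm.exists_not_adj hstar
  have h₄ : ∀ b ∈ B2, ∃ a ∈ A2, ¬ G.Adj b a :=
    fun _ => hsplit.symm.swap_ends.exists_not_adj hstar
  exact ⟨h₁, h₂, h₃, h₄, hsplit.four_le_ncard h₁ h₂, hsplit.symm.four_le_ncard h₃ h₄⟩
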